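/- The naive k-approximation of event-zones (replacing every finite constant exceeding k by ∞ in upper bounds, and by k in lower bounds) violates the soundness requirement Approx_k(Z) ⊆ Closure_R(Z): for the event-zone Z defined by ←a + →a ≤ 2 over the clocks of alphabet {a}, with R the Alur–Dill regions with constant 1 and k = 1, the approximation replaces the constraint by ←a + →a < ∞ and the result intersects a region disjoint from Closure_R(Z). -/

import Mathlib

/-- Event clocks over alphabet `α`: a history clock and a prophecy clock per letter. -/
inductive Clock (α : Type) where
  | hist (a : α)
  | proph (a : α)
deriving DecidableEq

/-- A valuation assigns to each event clock a real value or `⊥` (here `none`). -/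
def Val (α : Type) := Clock α → Option ℝ

/-- All defined clock values are nonnegative. -/
def Nonneg {α : Type} (v : Val α) : Prop := ∀ x r, v x = some r → 0 ≤ r

/-- `v[x := d]`. -/
def Val.set {α : Type} [DecidableEq α] (v : Val α) (x : Clock α) (d : Option ℝ) : Val α :=
  fun y => if y = x then d else v y

/-- Time elapse: history clocks increase, prophecy clocks decrease; `⊥` unaffected. -/
def elapse {α : Type} (v : Val α) (t : ℝ) : Val α := fun c =>
  match c with
  | .hist a => (v (.hist a)).map (· + t)
  | .proph a => (v (.proph a)).map (· - t)

/-- Time elapse by `t` is allowed: `t ≥ 0` and all prophecy clocks are at least `t`. -/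
def CanElapse {α : Type} (v : Val α) (t : ℝ) : Prop :=
  0 ≤ t ∧ ∀ a r, v (.proph a) = some r → t ≤ r

def InitialVal {α : Type} (v : Val α) : Prop := ∀ a, v (.hist a) = none

def FinalVal {α : Type} (v : Val α) : Prop := ∀ a, v (.proph a) = none

/-- Clock constraints: Boolean combinations of atomic constraints `x ∼ c`. -/
inductive Constr (α : Type) where
  | tt
  | lt (x : Clock α) (c : ℕ)
  | gt (x : Clock α) (c : ℕ)
  | eq (x : Clock α) (c : ℕ)
  | not (ψ : Constr α)
  | and (ψ₁ ψ₂ : Constr α)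

def Constr.sat {α : Type} (v : Val α) : Constr α → Prop
  | .tt => True
  | .lt x c => ∃ r, v x = some r ∧ r < (c : ℝ)
  | .gt x c => ∃ r, v x = some r ∧ (c : ℝ) < r
  | .eq x c => v x = some (c : ℝ)
  | .not ψ => ¬ Constr.sat v ψ
  | .and ψ₁ ψ₂ => Constr.sat v ψ₁ ∧ Constr.sat v ψ₂

/-- An event-clock automaton. -/
structure ECTA (α Q : Type) where
  init : Q
  edges : Set (Q × α × Constr α × Q)
  accept : Set Q

/-- Discrete step on letter `σ`: there is a nonnegative valuation `v̄` with
`v̄[→σ := 0] = v`, `v̄[←σ := 0] = v'` and `v̄ ⊨ ψ` for some edge `(q,σ,ψ,q')`. -/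
def DStep {α Q : Type} [DecidableEq α] (A : ECTA α Q) (q : Q) (v : Val α) (σ : α)
    (q' : Q) (v' : Val α) : Prop :=
  ∃ ψ, (q, σ, ψ, q') ∈ A.edges ∧
    ∃ vb : Val α, Nonneg vb ∧
      vb.set (.proph σ) (some 0) = v ∧
      vb.set (.hist σ) (some 0) = v' ∧
      Constr.sat vb ψ

/-- Combined step: elapse `t`, then fire a `σ`-edge. -/
def TStep {α Q : Type} [DecidableEq α] (A : ECTA α Q) (q : Q) (v : Val α) (t : ℝ) (σ : α)
    (q' : Q) (v' : Val α) : Prop :=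
  CanElapse v t ∧ DStep A q (elapse v t) σ q' v'

/-- Acceptance of a timed word (given by successive delays) from state `(q,v)`. -/
inductive ECAcc {α Q : Type} [DecidableEq α] (A : ECTA α Q) : Q → Val α → List (ℝ × α) → Prop where
  | nil : ∀ q v, q ∈ A.accept → FinalVal v → ECAcc A q v []
  | cons : ∀ q v t σ q' v' w, TStep A q v t σ q' v' → ECAcc A q' v' w → ECAcc A q v ((t, σ) :: w)

/-- `Untime(L(A,(q,v)))`. -/
def UntimedLangFrom {α Q : Type} [DecidableEq α] (A : ECTA α Q) (q : Q) (v : Val α) :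
    Set (List α) :=
  { w | ∃ θ : List (ℝ × α), ECAcc A q v θ ∧ θ.map Prod.snd = w }

/-- The timed language of `A` (initialized runs). -/
def TLang {α Q : Type} [DecidableEq α] (A : ECTA α Q) : Set (List (ℝ × α)) :=
  { θ | ∃ v, Nonneg v ∧ InitialVal v ∧ ECAcc A A.init v θ }

/-- `Untime(L(A))`. -/
def UntimedLang {α Q : Type} [DecidableEq α] (A : ECTA α Q) : Set (List α) :=
  { w | ∃ v, Nonneg v ∧ InitialVal v ∧ w ∈ UntimedLangFrom A A.init v }
/-- Distance to the relevant integer boundary: `⌈r⌉ − r` for history clocks,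
`r − ⌊r⌋` for prophecy clocks. -/
noncomputable def fracDist {α : Type} : Clock α → ℝ → ℝ
  | .hist _, r => (⌈r⌉ : ℝ) - r
  | .proph _, r => r - (⌊r⌋ : ℝ)

/-- Signed value used for diagonal constraints: prophecy clocks are negated. -/
def sval {α : Type} : Clock α → ℝ → ℝ
  | .hist _, r => r
  | .proph _, r => -r

/-- The Alur–Dill region equivalence with maximal constant `cmax`. -/
def RegEq {α : Type} (cmax : ℕ) (v₁ v₂ : Val α) : Prop :=
  (∀ x, v₁ x = none ↔ v₂ x = none) ∧
  (∀ x r₁ r₂, v₁ x = some r₁ → v₂ x = some r₂ →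
      (((cmax : ℝ) < r₁ ∧ (cmax : ℝ) < r₂) ∨ (⌈r₁⌉ = ⌈r₂⌉ ∧ ⌊r₁⌋ = ⌊r₂⌋))) ∧
  (∀ x y rx₁ ry₁ rx₂ ry₂, v₁ x = some rx₁ → v₁ y = some ry₁ →
      v₂ x = some rx₂ → v₂ y = some ry₂ → rx₁ ≤ (cmax : ℝ) → ry₁ ≤ (cmax : ℝ) →
      (fracDist x rx₁ ≤ fracDist y ry₁ ↔ fracDist x rx₂ ≤ fracDist y ry₂))

/-- The refined (Bouyer-style) region equivalence. -/
def RegEqD {α : Type} (cmax : ℕ) (v₁ v₂ : Val α) : Prop :=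
  RegEq cmax v₁ v₂ ∧
  (∀ x y rx₁ ry₁ rx₂ ry₂, v₁ x = some rx₁ → v₁ y = some ry₁ →
      v₂ x = some rx₂ → v₂ y = some ry₂ →
      ((cmax : ℝ) < rx₁ ∨ (cmax : ℝ) < ry₁) →
      ((2 * (cmax : ℝ) < |sval x rx₁ - sval y ry₁| ∧ 2 * (cmax : ℝ) < |sval x rx₂ - sval y ry₂|) ∨
       (⌊sval x rx₁ - sval y ry₁⌋ = ⌊sval x rx₂ - sval y ry₂⌋ ∧
        ⌈sval x rx₁ - sval y ry₁⌉ = ⌈sval x rx₂ - sval y ry₂⌉)))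

/-- A region of an equivalence `E`: an equivalence class of nonnegative valuations. -/
def IsRegionOf {α : Type} (E : Val α → Val α → Prop) (r : Set (Val α)) : Prop :=
  ∃ v, Nonneg v ∧ r = { v' | Nonneg v' ∧ E v v' }

def InitialRegion {α : Type} (r : Set (Val α)) : Prop := ∀ v ∈ r, InitialVal v
def FinalRegion {α : Type} (r : Set (Val α)) : Prop := ∀ v ∈ r, FinalVal v

/-- Acceptance in the universal region automaton `RA(∀,E,A)`. -/
inductive UAcc {α Q : Type} [DecidableEq α] (A : ECTA α Q) (E : Val α → Val α → Prop) :
    Q → Set (Val α) → List α → Prop where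
  | nil : ∀ q r, q ∈ A.accept → IsRegionOf E r → FinalRegion r → UAcc A E q r []
  | cons : ∀ q r σ q' r' w, IsRegionOf E r → IsRegionOf E r' →
      (∀ v ∈ r, ∃ t v', v' ∈ r' ∧ TStep A q v t σ q' v') →
      UAcc A E q' r' w → UAcc A E q r (σ :: w)

/-- Acceptance in the existential region automaton `RA(∃,E,A)`. -/
inductive EAcc {α Q : Type} [DecidableEq α] (A : ECTA α Q) (E : Val α → Val α → Prop) :
    Q → Set (Val α) → List α → Prop where
  | nil : ∀ q r, q ∈ A.accept → IsRegionOf E r → FinalRegion r → EAcc A E q r []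
  | cons : ∀ q r σ q' r' w, IsRegionOf E r → IsRegionOf E r' →
      (∃ v ∈ r, ∃ t v', v' ∈ r' ∧ TStep A q v t σ q' v') →
      EAcc A E q' r' w → EAcc A E q r (σ :: w)

/-- The language of the universal region automaton. -/
def ULang {α Q : Type} [DecidableEq α] (A : ECTA α Q) (E : Val α → Val α → Prop) :
    Set (List α) :=
  { w | ∃ r, IsRegionOf E r ∧ InitialRegion r ∧ UAcc A E A.init r w }

/-- The language of the existential region automaton. -/
def ELang {α Q : Type} [DecidableEq α] (A : ECTA α Q) (E : Val α → Val α → Prop) :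
    Set (List α) :=
  { w | ∃ r, IsRegionOf E r ∧ InitialRegion r ∧ EAcc A E A.init r w }

/-- All constants in a constraint are at most `k`. -/
def Constr.BoundedBy {α : Type} (k : ℕ) : Constr α → Prop
  | .tt => True
  | .lt _ c => c ≤ k
  | .gt _ c => c ≤ k
  | .eq _ c => c ≤ k
  | .not ψ => Constr.BoundedBy k ψ
  | .and ψ₁ ψ₂ => Constr.BoundedBy k ψ₁ ∧ Constr.BoundedBy k ψ₂

/-- `cmax` bounds all constants appearing in the guards of `A`. -/
def MaxConstLe {α Q : Type} (A : ECTA α Q) (k : ℕ) : Prop :=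
  ∀ e ∈ A.edges, Constr.BoundedBy k e.2.2.1
/-- Whether a clock is a prophecy clock. -/
def Clock.isProph {α : Type} : Clock α → Bool
  | .hist _ => false
  | .proph _ => true

/-- Comparison operators `≤, <, ≥, >` used in zone constraints. -/
inductive Cmp where
  | le | lt | ge | gt

def Cmp.sat : Cmp → ℝ → ℝ → Prop
  | .le, r, c => r ≤ c
  | .lt, r, c => r < c
  | .ge, r, c => c ≤ r
  | .gt, r, c => c < r

/-- Atomic zone constraints: `x = ⊥`, `x ∼ c`, `x₁ − x₂ ∼ c`, `x₁ + x₂ ∼ c`. -/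
inductive ZAtom (α : Type) where
  | bot (x : Clock α)
  | single (x : Clock α) (op : Cmp) (c : ℤ)
  | diff (x y : Clock α) (op : Cmp) (c : ℤ)
  | sum (x y : Clock α) (op : Cmp) (c : ℤ)

/-- Well-formedness: differences for clocks of the same type, sums for opposite types. -/
def ZAtom.WF {α : Type} : ZAtom α → Prop
  | .bot _ => True
  | .single _ _ _ => True
  | .diff x y _ _ => x.isProph = y.isProph
  | .sum x y _ _ => x.isProph ≠ y.isProph

def ZAtom.sat {α : Type} (v : Val α) : ZAtom α → Prop
  | .bot x => v x = none
  | .single x op c => ∃ r, v x = some r ∧ op.sat r (c : ℝ)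
  | .diff x y op c => ∃ rx ry, v x = some rx ∧ v y = some ry ∧ op.sat (rx - ry) (c : ℝ)
  | .sum x y op c => ∃ rx ry, v x = some rx ∧ v y = some ry ∧ op.sat (rx + ry) (c : ℝ)

/-- An event-zone: a set of (nonnegative) valuations definable by a finite
conjunction of well-formed atomic zone constraints. -/
def IsEventZone {α : Type} (Z : Set (Val α)) : Prop :=
  ∃ l : List (ZAtom α), (∀ a ∈ l, a.WF) ∧ Z = { v | Nonneg v ∧ ∀ a ∈ l, a.sat v }

/-- Closure by regions: the union of all regions meeting `Z`. -/
def ClosureR {α : Type} (cmax : ℕ) (Z : Set (Val α)) : Set (Val α) :=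
  { v' | Nonneg v' ∧ ∃ v ∈ Z, RegEq cmax v v' }

/-- Future (time elapse) of a set of valuations. -/
def FutureS {α : Type} (Z : Set (Val α)) : Set (Val α) :=
  { w | ∃ v ∈ Z, ∃ t, CanElapse v t ∧ w = elapse v t }

/-- The event-zone `←a + →a ≤ 2` over the clocks of the one-letter alphabet. -/
def Zsum : Set (Val Unit) :=
  { v | Nonneg v ∧ ∃ rh rp : ℝ, v (.hist ()) = some rh ∧ v (.proph ()) = some rp ∧
      rh + rp ≤ 2 }

/-- The naive `k`-approximation (`k = 1`) of `Zsum`: the constant `2 > 1` of the sum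
constraint is replaced by `∞`, i.e. the constraint becomes `←a + →a < ∞`. -/
def ApproxZsum : Set (Val Unit) :=
  { v | Nonneg v ∧ (∃ rh : ℝ, v (.hist ()) = some rh) ∧ (∃ rp : ℝ, v (.proph ()) = some rp) }

/-! Region equivalence with constant `1` keeps track, clock by clock, of whether the value exceeds
`1` (through `⌈r⌉`), but not of the sum of two values above `1`. Hence a valuation whose two
clocks both exceed `1` is never region-equivalent to a point of `←a + →a ≤ 2`. The valuation with
both clocks equal to `2` lies in the naive approximation, and its region misses the closure. -/

section RegionEquivalence

variable {α : Type} {cmax : ℕ}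

def Val.Exceeds (v : Val α) (c : ℕ) (x : Clock α) : Prop :=
  ∃ r, v x = some r ∧ (c : ℝ) < r

def regionOf (E : Val α → Val α → Prop) (v : Val α) : Set (Val α) :=
  { v' | Nonneg v' ∧ E v v' }

theorem isRegionOf_regionOf {E : Val α → Val α → Prop} {v : Val α} (hv : Nonneg v) :
    IsRegionOf E (regionOf E v) :=
  ⟨v, hv, rfl⟩

theorem RegEq.refl (v : Val α) : RegEq cmax v v := by
  refine ⟨fun _ => Iff.rfl, fun x r₁ r₂ h₁ h₂ => ?_,
    fun x y rx₁ ry₁ rx₂ ry₂ hx₁ hy₁ hx₂ hy₂ _ _ => ?_⟩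
  · obtain rfl : r₁ = r₂ := Option.some_injective _ (h₁.symm.trans h₂)
    exact Or.inr ⟨rfl, rfl⟩
  · obtain rfl : rx₁ = rx₂ := Option.some_injective _ (hx₁.symm.trans hx₂)
    obtain rfl : ry₁ = ry₂ := Option.some_injective _ (hy₁.symm.trans hy₂)
    rfl

theorem RegEq.lt_iff_lt {u v : Val α} (h : RegEq cmax u v) {x : Clock α} {r r' : ℝ}
    (hu : u x = some r) (hv : v x = some r') : (cmax : ℝ) < r ↔ (cmax : ℝ) < r' := by
  rcases h.2.1 x r r' hu hv with ⟨hr, hr'⟩ | ⟨hceil, -⟩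
  · exact iff_of_true hr hr'
  · have lt_iff_lt_ceil (s : ℝ) : (cmax : ℝ) < s ↔ (cmax : ℤ) < ⌈s⌉ := by
      rw [Int.lt_ceil]; norm_cast
    rw [lt_iff_lt_ceil, lt_iff_lt_ceil, hceil]

theorem RegEq.exceeds_iff {u v : Val α} (h : RegEq cmax u v) (x : Clock α) :
    u.Exceeds cmax x ↔ v.Exceeds cmax x := by
  constructor
  · rintro ⟨r, hu, hr⟩
    obtain ⟨r', hv⟩ := Option.ne_none_iff_exists'.mp fun hv => by simp [(h.1 x).mpr hv] at hu
    exact ⟨r', hv, (h.lt_iff_lt hu hv).mp hr⟩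
  · rintro ⟨r', hv, hr'⟩
    obtain ⟨r, hu⟩ := Option.ne_none_iff_exists'.mp fun hu => by simp [(h.1 x).mp hu] at hv
    exact ⟨r, hu, (h.lt_iff_lt hu hv).mpr hr'⟩

end RegionEquivalence

section SumZone

def BothExceedOne (v : Val Unit) : Prop :=
  v.Exceeds 1 (.hist ()) ∧ v.Exceeds 1 (.proph ())

theorem RegEq.bothExceedOne_iff {u v : Val Unit} (h : RegEq 1 u v) :
    BothExceedOne u ↔ BothExceedOne v :=
  and_congr (h.exceeds_iff _) (h.exceeds_iff _)

theorem not_bothExceedOne_of_mem_Zsum {v : Val Unit} (hv : v ∈ Zsum) : ¬ BothExceedOne v := by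
  obtain ⟨-, rh, rp, hh, hp, hsum⟩ := hv
  rintro ⟨⟨rh', hh', hrh⟩, ⟨rp', hp', hrp⟩⟩
  obtain rfl : rh = rh' := Option.some_injective _ (hh.symm.trans hh')
  obtain rfl : rp = rp' := Option.some_injective _ (hp.symm.trans hp')
  push_cast at hrh hrp
  linarith

theorem not_bothExceedOne_of_mem_closureR_Zsum {v : Val Unit} (hv : v ∈ ClosureR 1 Zsum) :
    ¬ BothExceedOne v := by
  obtain ⟨-, u, hu, huv⟩ := hv
  rw [← huv.bothExceedOne_iff]
  exact not_bothExceedOne_of_mem_Zsum hu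

noncomputable def bothTwo : Val Unit := fun _ => some 2

theorem nonneg_bothTwo : Nonneg bothTwo := by
  rintro x r ⟨⟩
  norm_num

theorem bothTwo_mem_approxZsum : bothTwo ∈ ApproxZsum :=
  ⟨nonneg_bothTwo, ⟨2, rfl⟩, ⟨2, rfl⟩⟩

theorem bothExceedOne_bothTwo : BothExceedOne bothTwo :=
  ⟨⟨2, rfl, by norm_num⟩, ⟨2, rfl, by norm_num⟩⟩

theorem regionOf_bothTwo_inter_closureR_Zsum_eq_empty :
    regionOf (RegEq 1) bothTwo ∩ ClosureR 1 Zsum = ∅ := by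
  refine Set.eq_empty_of_forall_notMem fun v ⟨⟨_, hv⟩, hcl⟩ => ?_
  exact not_bothExceedOne_of_mem_closureR_Zsum hcl (hv.bothExceedOne_iff.mp bothExceedOne_bothTwo)

end SumZone

/-- The naive `k`-approximation violates `Approx_k(Z) ⊆ Closure_R(Z)`: for
`Z = (←a + →a ≤ 2)`, `R` the Alur–Dill regions with constant 1 and `k = 1`, the
approximation intersects a region disjoint from `Closure_R(Z)`. -/
theorem naive_k_approximation_unsound :
    ¬ ApproxZsum ⊆ ClosureR 1 Zsum ∧
    ∃ r : Set (Val Unit), IsRegionOf (RegEq 1) r ∧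
      (r ∩ ApproxZsum).Nonempty ∧ r ∩ ClosureR 1 Zsum = ∅ := by
  have hmem : bothTwo ∈ regionOf (RegEq 1) bothTwo ∩ ApproxZsum :=
    ⟨⟨nonneg_bothTwo, RegEq.refl bothTwo⟩, bothTwo_mem_approxZsum⟩
  have hdisj := regionOf_bothTwo_inter_closureR_Zsum_eq_empty
  refine ⟨fun hsub => ?_, _, isRegionOf_regionOf nonneg_bothTwo, ⟨_, hmem⟩, hdisj⟩
  exact Set.eq_empty_iff_forall_notMem.mp hdisj _ ⟨hmem.1, hsub hmem.2⟩
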